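/- Under the evaluation W = 1 the braid group representations factor through the symmetric group S₃: for every k ∈ {4,3,2,1}, the evaluated matrices Mₖ = ev₁(Rₖ) and Nₖ = ev₁(Qₖ) (obtained by substituting W = 1 in every entry, which is legitimate since all denominators are powers of W) satisfy Mₖ² = 1, Nₖ² = 1 and (Mₖ·Nₖ)³ = 1. -/
import Mathlib


noncomputable section

/-- The variable `W` of the field `K = ℚ(W)` of rational functions. -/
def W : RatFunc ℚ := RatFunc.X

/-- The blocks `Rₖ` of the image of the elementary braid `σ₁` of `B₃` under the
invariant `Z_spin7` obtained by composing the universal Vassiliev–Kontsevich invariant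
with the weight system of the spinor representation of `so₇`. -/
def R4 : Matrix (Fin 4) (Fin 4) (RatFunc ℚ) :=
  !![W ^ 21, -W * (1 - W ^ 4 + W ^ 8), -W ^ 9 * (1 - W ^ 4 + W ^ 8), W ^ (-3 : ℤ);
     0, -W, -(1 - W ^ 4) * W ^ 9, W ^ (-3 : ℤ);
     0, 0, -W ^ 9, W ^ (-3 : ℤ);
     0, 0, 0, W ^ (-3 : ℤ)]

def R3 : Matrix (Fin 3) (Fin 3) (RatFunc ℚ) :=
  !![-W, -W ^ (-11 : ℤ) * (W ^ 20 - 1), -W ^ 9;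
     0, -W ^ 9, -W ^ 9;
     0, 0, W ^ (-3 : ℤ)]

def R2 : Matrix (Fin 2) (Fin 2) (RatFunc ℚ) :=
  !![-W, -W; 0, W ^ (-3 : ℤ)]

def R1 : Matrix (Fin 1) (Fin 1) (RatFunc ℚ) :=
  !![W ^ (-3 : ℤ)]

/-- The blocks `Qₖ` of the image of the elementary braid `σ₂` of `B₃` under `Z_spin7`. -/
def Q4 : Matrix (Fin 4) (Fin 4) (RatFunc ℚ) :=
  !![W ^ (-3 : ℤ), 0, 0, 0;
     W ^ 9, -W ^ 9, 0, 0;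
     W ^ (-3 : ℤ), W ^ (-3 : ℤ) * (W ^ 4 - 1), -W, 0;
     W ^ 9, -W ^ 9 * (W ^ 8 - W ^ 4 + 1), -W ^ 13 * (W ^ 8 - W ^ 4 + 1), W ^ 21]

def Q3 : Matrix (Fin 3) (Fin 3) (RatFunc ℚ) :=
  !![W ^ (-3 : ℤ), 0, 0;
     W ^ 9, -W ^ 9, 0;
     -W ^ 9, W ^ (-11 : ℤ) * (W ^ 20 - 1), -W]

def Q2 : Matrix (Fin 2) (Fin 2) (RatFunc ℚ) :=
  !![W ^ (-3 : ℤ), 0; -W ^ (-3 : ℤ), -W]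

def Q1 : Matrix (Fin 1) (Fin 1) (RatFunc ℚ) :=
  !![W ^ (-3 : ℤ)]

/-- Entrywise evaluation at `W = 1` (legitimate since every entry is a Laurent
polynomial in `W`, so no denominator vanishes at `1`). -/
def ev1 : RatFunc ℚ → ℚ := RatFunc.eval (RingHom.id ℚ) 1

def M4 : Matrix (Fin 4) (Fin 4) ℚ := R4.map ev1
def M3 : Matrix (Fin 3) (Fin 3) ℚ := R3.map ev1
def M2 : Matrix (Fin 2) (Fin 2) ℚ := R2.map ev1
def M1 : Matrix (Fin 1) (Fin 1) ℚ := R1.map ev1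
def N4 : Matrix (Fin 4) (Fin 4) ℚ := Q4.map ev1
def N3 : Matrix (Fin 3) (Fin 3) ℚ := Q3.map ev1
def N2 : Matrix (Fin 2) (Fin 2) ℚ := Q2.map ev1
def N1 : Matrix (Fin 1) (Fin 1) ℚ := Q1.map ev1


lemma ev1_aux (p : Polynomial ℚ) (k : ℕ) (x : RatFunc ℚ)
    (hx : x * W ^ k = algebraMap (Polynomial ℚ) (RatFunc ℚ) p) : ev1 x = p.eval 1 := by
  have hW : (RatFunc.X : RatFunc ℚ) ≠ 0 := RatFunc.X_ne_zero
  have hWk : W ^ k = algebraMap (Polynomial ℚ) (RatFunc ℚ) (Polynomial.X ^ k) := by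
    simp [W, RatFunc.algebraMap_X]
  have hq : (Polynomial.X ^ k : Polynomial ℚ) ≠ 0 := pow_ne_zero _ Polynomial.X_ne_zero
  have hxq : x = algebraMap (Polynomial ℚ) (RatFunc ℚ) p
      / algebraMap (Polynomial ℚ) (RatFunc ℚ) (Polynomial.X ^ k) := by
    rw [eq_div_iff (by rw [← hWk]; exact pow_ne_zero _ hW), ← hWk]; exact hx
  have hd : (RatFunc.denom x) ∣ Polynomial.X ^ k := (RatFunc.denom_dvd hq).2 ⟨p, hxq⟩
  obtain ⟨r, hr⟩ := hd
  have h1 : (RatFunc.denom x).eval 1 * r.eval 1 = 1 := by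
    have := congrArg (Polynomial.eval (1:ℚ)) hr
    simpa using this.symm
  have hdenom : Polynomial.eval₂ (RingHom.id ℚ) 1 (RatFunc.denom x) ≠ 0 := by
    show (RatFunc.denom x).eval 1 ≠ 0
    intro h; rw [h, zero_mul] at h1; exact one_ne_zero h1.symm
  have hdenom2 : Polynomial.eval₂ (RingHom.id ℚ) 1
      (RatFunc.denom (algebraMap (Polynomial ℚ) (RatFunc ℚ) (Polynomial.X ^ k))) ≠ 0 := by
    rw [RatFunc.denom_algebraMap]; simp
  have hmul := RatFunc.eval_mul (f := RingHom.id ℚ) (a := 1) hdenom hdenom2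
  simp only [RatFunc.eval_algebraMap] at hmul
  have hXk : Polynomial.eval₂ (RingHom.id ℚ) 1
      ((algebraMap (Polynomial ℚ) (Polynomial ℚ)) (Polynomial.X ^ k)) = 1 := by simp
  rw [hXk, mul_one, ← hWk, hx, RatFunc.eval_algebraMap] at hmul
  rw [ev1, ← hmul]
  simp

lemma hWne : (W : RatFunc ℚ) ≠ 0 := RatFunc.X_ne_zero

lemma Wn3 : W ^ (-3 : ℤ) = (W ^ 3)⁻¹ := by
  rw [show (-3:ℤ) = -((3:ℕ):ℤ) by norm_num, zpow_neg, zpow_natCast]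

lemma Wn11 : W ^ (-11 : ℤ) = (W ^ 11)⁻¹ := by
  rw [show (-11:ℤ) = -((11:ℕ):ℤ) by norm_num, zpow_neg, zpow_natCast]

lemma Xn3 : (RatFunc.X : RatFunc ℚ) ^ (-3 : ℤ) = (RatFunc.X ^ 3)⁻¹ := Wn3

lemma Xn11 : (RatFunc.X : RatFunc ℚ) ^ (-11 : ℤ) = (RatFunc.X ^ 11)⁻¹ := Wn11

lemma amX : algebraMap (Polynomial ℚ) (RatFunc ℚ) Polynomial.X = W := RatFunc.algebraMap_X

lemma E1 : ev1 (W ^ 21) = 1 := by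
  rw [ev1_aux (Polynomial.X ^ 21) 0 _ (by simp [map_pow, amX, W])]; simp

lemma E2 : ev1 (-W * (1 - W ^ 4 + W ^ 8)) = -1 := by
  rw [ev1_aux (-(Polynomial.X * (1 - Polynomial.X ^ 4 + Polynomial.X ^ 8))) 0 _ ?_]
  · simp
  · push_cast [map_neg, map_mul, map_add, map_sub, map_one, map_pow, amX, W]; ring

lemma E3 : ev1 (-W ^ 9 * (1 - W ^ 4 + W ^ 8)) = -1 := by
  rw [ev1_aux (-(Polynomial.X ^ 9 * (1 - Polynomial.X ^ 4 + Polynomial.X ^ 8))) 0 _ ?_]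
  · simp
  · push_cast [map_neg, map_mul, map_add, map_sub, map_one, map_pow, amX, W]; ring

lemma E4 : ev1 (W ^ (-3 : ℤ)) = 1 := by
  rw [ev1_aux 1 3 _ ?_]
  · simp
  · rw [Wn3, map_one]; exact inv_mul_cancel₀ (pow_ne_zero _ hWne)

lemma E5 : ev1 (-W) = -1 := by
  rw [ev1_aux (-Polynomial.X) 0 _ (by simp [map_neg, amX, W])]; simp

lemma E6 : ev1 (-(1 - W ^ 4) * W ^ 9) = 0 := by
  rw [ev1_aux (-(1 - Polynomial.X ^ 4) * Polynomial.X ^ 9) 0 _ ?_]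
  · simp
  · push_cast [map_neg, map_mul, map_sub, map_one, map_pow, amX, W]; ring

lemma E7 : ev1 (-W ^ 9) = -1 := by
  rw [ev1_aux (-Polynomial.X ^ 9) 0 _ (by push_cast [map_neg, map_pow, amX, W]; ring)]; simp

lemma E8 : ev1 (-W ^ (-11 : ℤ) * (W ^ 20 - 1)) = 0 := by
  rw [ev1_aux (-(Polynomial.X ^ 20 - 1)) 11 _ ?_]
  · simp
  · have hX : (RatFunc.X : RatFunc ℚ) ≠ 0 := RatFunc.X_ne_zero
    push_cast [map_neg, map_sub, map_one, map_pow, amX, W, Xn11]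
    field_simp

lemma E9 : ev1 (W ^ 9) = 1 := by
  rw [ev1_aux (Polynomial.X ^ 9) 0 _ (by simp [map_pow, amX, W])]; simp

lemma E10 : ev1 (W ^ (-3 : ℤ) * (W ^ 4 - 1)) = 0 := by
  rw [ev1_aux (Polynomial.X ^ 4 - 1) 3 _ ?_]
  · simp
  · have hX : (RatFunc.X : RatFunc ℚ) ≠ 0 := RatFunc.X_ne_zero
    push_cast [map_sub, map_one, map_pow, amX, W, Xn3]
    field_simp

lemma E11 : ev1 (-W ^ 9 * (W ^ 8 - W ^ 4 + 1)) = -1 := by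
  rw [ev1_aux (-(Polynomial.X ^ 9 * (Polynomial.X ^ 8 - Polynomial.X ^ 4 + 1))) 0 _ ?_]
  · simp
  · push_cast [map_neg, map_mul, map_add, map_sub, map_one, map_pow, amX, W]; ring

lemma E12 : ev1 (-W ^ 13 * (W ^ 8 - W ^ 4 + 1)) = -1 := by
  rw [ev1_aux (-(Polynomial.X ^ 13 * (Polynomial.X ^ 8 - Polynomial.X ^ 4 + 1))) 0 _ ?_]
  · simp
  · push_cast [map_neg, map_mul, map_add, map_sub, map_one, map_pow, amX, W]; ring

lemma E13 : ev1 (W ^ (-11 : ℤ) * (W ^ 20 - 1)) = 0 := by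
  rw [ev1_aux (Polynomial.X ^ 20 - 1) 11 _ ?_]
  · simp
  · have hX : (RatFunc.X : RatFunc ℚ) ≠ 0 := RatFunc.X_ne_zero
    push_cast [map_sub, map_one, map_pow, amX, W, Xn11]
    field_simp

lemma E14 : ev1 (-W ^ (-3 : ℤ)) = -1 := by
  rw [ev1_aux (-1 : Polynomial ℚ) 3 _ ?_]
  · simp
  · rw [Wn3, map_neg, map_one, neg_mul, inv_mul_cancel₀ (pow_ne_zero _ hWne)]

lemma E0 : ev1 0 = 0 := by simp [ev1]

lemma hM4 : M4 = !![1,-1,-1,1; 0,-1,0,1; 0,0,-1,1; 0,0,0,1] := by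
  ext i j
  fin_cases i <;> fin_cases j <;>
    first
      | exact E0 | exact E1 | exact E2 | exact E3 | exact E4 | exact E5 | exact E6
      | exact E7 | exact E8 | exact E9 | exact E10 | exact E11 | exact E12
      | exact E13 | exact E14

lemma hM3 : M3 = !![-1,0,-1; 0,-1,-1; 0,0,1] := by
  ext i j
  fin_cases i <;> fin_cases j <;>
    first
      | exact E0 | exact E1 | exact E2 | exact E3 | exact E4 | exact E5 | exact E6
      | exact E7 | exact E8 | exact E9 | exact E10 | exact E11 | exact E12
      | exact E13 | exact E14

lemma hM2 : M2 = !![-1,-1; 0,1] := by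
  ext i j
  fin_cases i <;> fin_cases j <;>
    first
      | exact E0 | exact E4 | exact E5

lemma hM1 : M1 = !![1] := by
  ext i j
  fin_cases i <;> fin_cases j <;> exact E4

lemma hN4 : N4 = !![1,0,0,0; 1,-1,0,0; 1,0,-1,0; 1,-1,-1,1] := by
  ext i j
  fin_cases i <;> fin_cases j <;>
    first
      | exact E0 | exact E1 | exact E2 | exact E3 | exact E4 | exact E5 | exact E6
      | exact E7 | exact E8 | exact E9 | exact E10 | exact E11 | exact E12
      | exact E13 | exact E14

lemma hN3 : N3 = !![1,0,0; 1,-1,0; -1,0,-1] := by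
  ext i j
  fin_cases i <;> fin_cases j <;>
    first
      | exact E0 | exact E4 | exact E5 | exact E7 | exact E9 | exact E13

lemma hN2 : N2 = !![1,0; -1,-1] := by
  ext i j
  fin_cases i <;> fin_cases j <;>
    first
      | exact E0 | exact E4 | exact E5 | exact E14

lemma hN1 : N1 = !![1] := by
  ext i j
  fin_cases i <;> fin_cases j <;> exact E4

lemma P4a : M4 ^ 2 = 1 := by
  simp only [hM4, hN4]
  ext i j
  fin_cases i <;> fin_cases j <;>
    simp [pow_succ, pow_zero, one_mul, Matrix.mul_apply, Fin.sum_univ_succ, Matrix.one_apply]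

lemma P4b : N4 ^ 2 = 1 := by
  simp only [hM4, hN4]
  ext i j
  fin_cases i <;> fin_cases j <;>
    simp [pow_succ, pow_zero, one_mul, Matrix.mul_apply, Fin.sum_univ_succ, Matrix.one_apply]

lemma P4c : (M4 * N4) ^ 3 = 1 := by
  simp only [hM4, hN4]
  ext i j
  fin_cases i <;> fin_cases j <;>
    simp [pow_succ, pow_zero, one_mul, Matrix.mul_apply, Fin.sum_univ_succ, Matrix.one_apply]

lemma P3a : M3 ^ 2 = 1 := by
  simp only [hM3, hN3]
  ext i j
  fin_cases i <;> fin_cases j <;>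
    simp [pow_succ, pow_zero, one_mul, Matrix.mul_apply, Fin.sum_univ_succ, Matrix.one_apply]

lemma P3b : N3 ^ 2 = 1 := by
  simp only [hM3, hN3]
  ext i j
  fin_cases i <;> fin_cases j <;>
    simp [pow_succ, pow_zero, one_mul, Matrix.mul_apply, Fin.sum_univ_succ, Matrix.one_apply]

lemma P3c : (M3 * N3) ^ 3 = 1 := by
  simp only [hM3, hN3]
  ext i j
  fin_cases i <;> fin_cases j <;>
    simp [pow_succ, pow_zero, one_mul, Matrix.mul_apply, Fin.sum_univ_succ, Matrix.one_apply]

lemma P2a : M2 ^ 2 = 1 := by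
  simp only [hM2, hN2]
  ext i j
  fin_cases i <;> fin_cases j <;>
    simp [pow_succ, pow_zero, one_mul, Matrix.mul_apply, Fin.sum_univ_succ, Matrix.one_apply]

lemma P2b : N2 ^ 2 = 1 := by
  simp only [hM2, hN2]
  ext i j
  fin_cases i <;> fin_cases j <;>
    simp [pow_succ, pow_zero, one_mul, Matrix.mul_apply, Fin.sum_univ_succ, Matrix.one_apply]

lemma P2c : (M2 * N2) ^ 3 = 1 := by
  simp only [hM2, hN2]
  ext i j
  fin_cases i <;> fin_cases j <;>
    simp [pow_succ, pow_zero, one_mul, Matrix.mul_apply, Fin.sum_univ_succ, Matrix.one_apply]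

lemma P1a : M1 ^ 2 = 1 := by
  simp only [hM1, hN1]
  ext i j
  fin_cases i <;> fin_cases j <;>
    simp [pow_succ, pow_zero, one_mul, Matrix.mul_apply, Fin.sum_univ_succ, Matrix.one_apply]

lemma P1b : N1 ^ 2 = 1 := by
  simp only [hM1, hN1]
  ext i j
  fin_cases i <;> fin_cases j <;>
    simp [pow_succ, pow_zero, one_mul, Matrix.mul_apply, Fin.sum_univ_succ, Matrix.one_apply]

lemma P1c : (M1 * N1) ^ 3 = 1 := by
  simp only [hM1, hN1]
  ext i j
  fin_cases i <;> fin_cases j <;>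
    simp [pow_succ, pow_zero, one_mul, Matrix.mul_apply, Fin.sum_univ_succ, Matrix.one_apply]

/-- Under the evaluation `W = 1` the braid group representations factor through the
symmetric group `S₃`: for every `k ∈ {4,3,2,1}` one has `Mₖ² = 1`, `Nₖ² = 1` and
`(Mₖ·Nₖ)³ = 1`. -/
theorem Zspin7_eval_one_factors_through_S3 :
    (M4 ^ 2 = 1 ∧ N4 ^ 2 = 1 ∧ (M4 * N4) ^ 3 = 1) ∧
    (M3 ^ 2 = 1 ∧ N3 ^ 2 = 1 ∧ (M3 * N3) ^ 3 = 1) ∧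
    (M2 ^ 2 = 1 ∧ N2 ^ 2 = 1 ∧ (M2 * N2) ^ 3 = 1) ∧
    (M1 ^ 2 = 1 ∧ N1 ^ 2 = 1 ∧ (M1 * N1) ^ 3 = 1) := by
  exact ⟨⟨P4a, P4b, P4c⟩, ⟨P3a, P3b, P3c⟩, ⟨P2a, P2b, P2c⟩, P1a, P1b, P1c⟩

end
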